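/- For every α ∈ (0, 1/4), the process (x, u₁, u₂, w₁, w₂) with x(t) = −4αt, u₁(t) ≡ −α, u₂(t) ≡ 0, w₁(t) ≡ 1, w₂(t) ≡ 0 is admissible for problem (L) and its cost equals ∫_0^1 (|x(t) − u₁(t)| + x(t)) dt = −3α/4 < 0. Consequently, since the process (x, u₁, u₂, w₁, w₂) = (0, 0, 0, 1, 0) is admissible for (L) with cost 0, the zero process is not a minimizer of problem (L). -/

import Mathlib

open MeasureTheory Set Filter

noncomputable section

/-- An admissible process for problem (L) on `[0,1]`: `x` is absolutely continuous (encoded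
via an integrable derivative `x'` and the integral representation), with
`ẋ(t) = 4w₁(t)u₁(t) + 4w₂(t)u₂(t)` a.e., state constraint `x(t) ≥ -1` on `[0,1]`, control
constraints `u₁(t), u₂(t) ∈ [-1,1]` a.e., `(w₁(t), w₂(t)) ∈ W` a.e. (i.e. `w₁, w₂ ≥ 0` and
`w₁ + w₂ = 1`), and `x(0) = 0`. -/
def AdmissibleL (x u₁ u₂ w₁ w₂ : ℝ → ℝ) : Prop :=
  (∃ x' : ℝ → ℝ, IntegrableOn x' (Icc (0:ℝ) 1) ∧
    (∀ t ∈ Icc (0:ℝ) 1, x t = x 0 + ∫ s in (0:ℝ)..t, x' s) ∧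
    (∀ᵐ t ∂(volume.restrict (Icc (0:ℝ) 1)),
      x' t = 4 * w₁ t * u₁ t + 4 * w₂ t * u₂ t)) ∧
  (∀ t ∈ Icc (0:ℝ) 1, -1 ≤ x t) ∧
  AEStronglyMeasurable u₁ (volume.restrict (Icc (0:ℝ) 1)) ∧
  AEStronglyMeasurable u₂ (volume.restrict (Icc (0:ℝ) 1)) ∧
  AEStronglyMeasurable w₁ (volume.restrict (Icc (0:ℝ) 1)) ∧
  AEStronglyMeasurable w₂ (volume.restrict (Icc (0:ℝ) 1)) ∧
  (∀ᵐ t ∂(volume.restrict (Icc (0:ℝ) 1)), u₁ t ∈ Icc (-1:ℝ) 1) ∧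
  (∀ᵐ t ∂(volume.restrict (Icc (0:ℝ) 1)), u₂ t ∈ Icc (-1:ℝ) 1) ∧
  (∀ᵐ t ∂(volume.restrict (Icc (0:ℝ) 1)), 0 ≤ w₁ t ∧ 0 ≤ w₂ t ∧ w₁ t + w₂ t = 1) ∧
  x 0 = 0

/-- The cost of a process for problem (L). -/
def costL (x u₁ u₂ w₁ w₂ : ℝ → ℝ) : ℝ :=
  ∫ t in (0:ℝ)..1, (w₁ t * |x t - u₁ t| + w₂ t * |x t - u₂ t| + x t)

/-! The ramp `x(t) = -4αt` pays `|x - u₁| = α|1 - 4t|` but gains `∫ x = -2α`, and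
`∫₀¹ |1 - 4t| dt = 5/4 < 2`, so its cost `-3α/4` undercuts the zero process, which is the
case `α = 0` of the same family. -/

theorem costL_of_weights_one_zero (x u₁ u₂ : ℝ → ℝ) :
    costL x u₁ u₂ (fun _ => 1) (fun _ => 0) = ∫ t in (0:ℝ)..1, (|x t - u₁ t| + x t) := by
  simp only [costL, one_mul, zero_mul, add_zero]

theorem integral_abs_one_sub_four_mul : ∫ t in (0:ℝ)..1, |1 - 4 * t| = 5 / 4 := by
  have hcont : Continuous fun t : ℝ => |1 - 4 * t| := by fun_prop
  rw [← intervalIntegral.integral_add_adjacent_intervals (b := 1 / 4)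
    (hcont.intervalIntegrable _ _) (hcont.intervalIntegrable _ _)]
  have left : ∫ t in (0:ℝ)..(1 / 4), |1 - 4 * t| = ∫ t in (0:ℝ)..(1 / 4), (1 - 4 * t) := by
    refine intervalIntegral.integral_congr fun t ht => abs_of_nonneg ?_
    rw [uIcc_of_le (by norm_num)] at ht
    linarith [ht.2]
  have right : ∫ t in (1 / 4:ℝ)..1, |1 - 4 * t| = ∫ t in (1 / 4:ℝ)..1, -(1 - 4 * t) := by
    refine intervalIntegral.integral_congr fun t ht => abs_of_nonpos ?_
    rw [uIcc_of_le (by norm_num)] at ht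
    linarith [ht.1]
  have hlin : Continuous fun t : ℝ => 4 * t := by fun_prop
  rw [left, right, intervalIntegral.integral_neg,
    intervalIntegral.integral_sub intervalIntegrable_const (hlin.intervalIntegrable _ _),
    intervalIntegral.integral_sub intervalIntegrable_const (hlin.intervalIntegrable _ _),
    intervalIntegral.integral_const_mul, intervalIntegral.integral_const_mul, integral_id,
    integral_id, intervalIntegral.integral_const, intervalIntegral.integral_const]
  norm_num

theorem integral_ramp_cost {α : ℝ} (hα : 0 ≤ α) :
    ∫ t in (0:ℝ)..1, (|(-4 * α * t) - (-α)| + -4 * α * t) = -(3 * α) / 4 := by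
  have integrand :
      ∀ t : ℝ, |(-4 * α * t) - (-α)| + -4 * α * t = α * |1 - 4 * t| + -4 * α * t := fun t => by
    rw [show -4 * α * t - -α = α * (1 - 4 * t) by ring, abs_mul, abs_of_nonneg hα]
  simp only [integrand]
  rw [intervalIntegral.integral_add ((by fun_prop : Continuous fun t : ℝ => α * |1 - 4 * t|)
      |>.intervalIntegrable _ _) ((by fun_prop : Continuous fun t : ℝ => -4 * α * t)
      |>.intervalIntegrable _ _),
    intervalIntegral.integral_const_mul, intervalIntegral.integral_const_mul, integral_id,
    integral_abs_one_sub_four_mul]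
  ring

theorem admissibleL_ramp {α : ℝ} (h₀ : -1 ≤ α) (h₁ : α ≤ 1 / 4) :
    AdmissibleL (fun t => -4 * α * t) (fun _ => -α) (fun _ => 0) (fun _ => 1) (fun _ => 0) := by
  refine ⟨⟨fun _ => -4 * α, integrableOn_const measure_Icc_lt_top.ne, fun t _ => ?_,
      .of_forall fun _ => by ring⟩, fun t ht => ?_, aestronglyMeasurable_const,
    aestronglyMeasurable_const, aestronglyMeasurable_const, aestronglyMeasurable_const,
    .of_forall fun _ => ⟨by linarith, by linarith⟩, .of_forall fun _ => by norm_num,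
    .of_forall fun _ => by norm_num, by ring⟩
  · simp only [intervalIntegral.integral_const, smul_eq_mul]
    ring
  · rcases le_total 0 α with hα | hα <;> nlinarith [ht.1, ht.2]

/-- for every `α ∈ (0, 1/4)` the process
`(x, u₁, u₂, w₁, w₂) = (-4αt, -α, 0, 1, 0)` is admissible for (L) with cost
`∫₀¹ (|x - u₁| + x) dt = -3α/4 < 0`; since the zero process `(0,0,0,1,0)` is admissible
with cost `0`, the zero process is not a minimizer of problem (L). -/
theorem example_L_zero_process_not_optimal :
    (∀ α ∈ Ioo (0:ℝ) (1/4),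
      AdmissibleL (fun t => -4 * α * t) (fun _ => -α) (fun _ => 0) (fun _ => 1)
        (fun _ => 0) ∧
      costL (fun t => -4 * α * t) (fun _ => -α) (fun _ => 0) (fun _ => 1) (fun _ => 0)
        = (∫ t in (0:ℝ)..1, (|(-4 * α * t) - (-α)| + -4 * α * t)) ∧
      (∫ t in (0:ℝ)..1, (|(-4 * α * t) - (-α)| + -4 * α * t)) = -(3 * α) / 4 ∧
      -(3 * α) / 4 < 0) ∧
    AdmissibleL (fun _ => 0) (fun _ => 0) (fun _ => 0) (fun _ => 1) (fun _ => 0) ∧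
    costL (fun _ => 0) (fun _ => 0) (fun _ => 0) (fun _ => 1) (fun _ => 0) = 0 ∧
    ¬ (∀ x u₁ u₂ w₁ w₂, AdmissibleL x u₁ u₂ w₁ w₂ →
        costL (fun _ => 0) (fun _ => 0) (fun _ => 0) (fun _ => 1) (fun _ => 0)
          ≤ costL x u₁ u₂ w₁ w₂) := by
  have zero_admissible :
      AdmissibleL (fun _ => 0) (fun _ => 0) (fun _ => 0) (fun _ => 1) (fun _ => 0) := by
    simpa using admissibleL_ramp (α := 0) (by norm_num) (by norm_num)
  have zero_cost :
      costL (fun _ => 0) (fun _ => 0) (fun _ => 0) (fun _ => 1) (fun _ => 0) = 0 := by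
    simp [costL]
  refine ⟨fun α hα => ⟨admissibleL_ramp (by linarith [hα.1]) hα.2.le,
      costL_of_weights_one_zero _ _ _, integral_ramp_cost hα.1.le, by linarith [hα.1]⟩,
    zero_admissible, zero_cost, fun zero_optimal => ?_⟩
  have := zero_optimal _ _ _ _ _ (admissibleL_ramp (α := 1 / 8) (by norm_num) (by norm_num))
  rw [zero_cost, costL_of_weights_one_zero, integral_ramp_cost (by norm_num)] at this
  norm_num at this
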